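/- arXiv:0804.0780 — 6 statements merged into one kernel-verified Lean document; each statement's English description precedes it below -/
import Mathlib

section
/- Let a < b, set J = [a,b], and let V ⊆ ℝ be an interval with J ⊆ V. Let D > 0, δ ≥ 0, k ≥ 0 with k + δ < D. Let f : ℝ → ℝ be differentiable on J with f'(x) ≥ D for all x ∈ J; let ε : ℝ × ℝ → ℝ be such that for each y ∈ V the map x ↦ ε(x,y) is differentiable on J with |∂ε/∂x(x,y)| ≤ δ, and |ε(x,y) − ε(x,y')| ≤ δ·|y − y'| for all x ∈ J and y, y' ∈ V; and let φ : V → ℝ be Lipschitz with constant k. Assume the boundary condition: for every y ∈ V, f(a) − ε(a,y) ≤ φ(a) and φ(b) ≤ f(b) − ε(b,y). Then there exists a unique function ψ : V → J such that φ(ψ(y)) = f(ψ(y)) − ε(ψ(y), y) for every y ∈ V — equivalently, the preimage under the Hénon-like map F(x,y) = (f(x) − ε(x,y), x) of the graph {(φ(y'), y') : y' ∈ V}, intersected with J × V, is the graph {(ψ(y), y) : y ∈ V} — and moreover ψ is Lipschitz with constant δ/(D − δ − k). -/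
open Set

/-- Lemma 3.1 of the paper: the preimage under a Hénon-like map
`F(x,y) = (f(x) − ε(x,y), x)` of the graph of a Lipschitz function `φ` over the
vertical axis, intersected with `J × V`, is the graph of a Lipschitz
function `ψ` with small Lipschitz constant. -/
theorem graph_preimage_of_henon_like
    (a b : ℝ) (hab : a < b)
    (V : Set ℝ) (hV : V.OrdConnected) (hJV : Icc a b ⊆ V)
    (D δ k : ℝ) (hD : 0 < D) (hδ : 0 ≤ δ) (hk : 0 ≤ k) (hkδ : k + δ < D)
    (f : ℝ → ℝ) (f' : ℝ → ℝ)
    (hf : ∀ x ∈ Icc a b, HasDerivWithinAt f (f' x) (Icc a b) x)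
    (hf' : ∀ x ∈ Icc a b, D ≤ f' x)
    (ε : ℝ → ℝ → ℝ) (εx : ℝ → ℝ → ℝ)
    (hεx : ∀ y ∈ V, ∀ x ∈ Icc a b,
      HasDerivWithinAt (fun x => ε x y) (εx x y) (Icc a b) x ∧ |εx x y| ≤ δ)
    (hεy : ∀ x ∈ Icc a b, ∀ y ∈ V, ∀ y' ∈ V, |ε x y - ε x y'| ≤ δ * |y - y'|)
    (φ : ℝ → ℝ)
    (hφ : ∀ y ∈ V, ∀ y' ∈ V, |φ y - φ y'| ≤ k * |y - y'|)
    (hbd : ∀ y ∈ V, f a - ε a y ≤ φ a ∧ φ b ≤ f b - ε b y) :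
    ∃ ψ : ℝ → ℝ,
      (∀ y ∈ V, ψ y ∈ Icc a b) ∧
      (∀ y ∈ V, φ (ψ y) = f (ψ y) - ε (ψ y) y) ∧
      (∀ y ∈ V, ∀ y' ∈ V, |ψ y - ψ y'| ≤ (δ / (D - δ - k)) * |y - y'|) ∧
      (∀ ψ' : ℝ → ℝ, (∀ y ∈ V, ψ' y ∈ Icc a b) →
        (∀ y ∈ V, φ (ψ' y) = f (ψ' y) - ε (ψ' y) y) →
        ∀ y ∈ V, ψ' y = ψ y) ∧
      {p : ℝ × ℝ | p.1 ∈ Icc a b ∧ p.2 ∈ V ∧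
          (f p.1 - ε p.1 p.2, p.1) ∈ {q : ℝ × ℝ | q.2 ∈ V ∧ q.1 = φ q.2}}
        = {p : ℝ × ℝ | p.2 ∈ V ∧ p.1 = ψ p.2} := by
  have hc : 0 < D - δ - k := by linarith
  set g : ℝ → ℝ → ℝ := fun y x => f x - ε x y - φ x with hg
  -- key increase estimate
  have key : ∀ y ∈ V, ∀ x ∈ Icc a b, ∀ x' ∈ Icc a b, x ≤ x' →
      (D - δ - k) * (x' - x) ≤ g y x' - g y x := by
    intro y hy x hx x' hx' hxx'
    have hmono : MonotoneOn (fun t => f t - ε t y - (D - δ) * t) (Icc a b) := by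
      apply monotoneOn_of_hasDerivWithinAt_nonneg (f' := fun t => f' t - εx t y - (D - δ))
        (convex_Icc a b)
      · intro t ht
        have hlin : HasDerivWithinAt (fun t => (D - δ) * t) (D - δ) (Icc a b) t := by
          simpa using (hasDerivWithinAt_id t (Icc a b)).const_mul (D - δ)
        exact (((hf t ht).sub ((hεx y hy t ht).1)).sub hlin).continuousWithinAt
      · intro t ht
        rw [interior_Icc] at ht
        have ht' : t ∈ Icc a b := Ioo_subset_Icc_self ht
        have hlin : HasDerivWithinAt (fun t => (D - δ) * t) (D - δ) (Icc a b) t := by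
          simpa using (hasDerivWithinAt_id t (Icc a b)).const_mul (D - δ)
        have hD2 := (((hf t ht').sub ((hεx y hy t ht').1)).sub hlin).mono Ioo_subset_Icc_self
        rw [interior_Icc]
        exact hD2
      · intro t ht
        rw [interior_Icc] at ht
        have ht' : t ∈ Icc a b := Ioo_subset_Icc_self ht
        have h1 := hf' t ht'
        have h2 := (hεx y hy t ht').2
        have := abs_le.1 h2
        linarith [this.2]
    have hm := hmono hx hx' hxx'
    simp only at hm
    have hφd : φ x' - φ x ≤ k * (x' - x) := by
      have := hφ x (hJV hx) x' (hJV hx')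
      have h2 := abs_le.1 this
      have : |x - x'| = x' - x := by rw [abs_sub_comm]; exact abs_of_nonneg (by linarith)
      rw [this] at h2
      linarith [h2.1]
    simp only [hg]
    nlinarith [hm, hφd]
  have hgcont : ∀ y ∈ V, ContinuousOn (g y) (Icc a b) := by
    intro y hy
    have hφc : ContinuousOn φ (Icc a b) := by
      have : LipschitzOnWith ⟨k, hk⟩ φ (Icc a b) := by
        apply LipschitzOnWith.of_dist_le_mul
        intro x hx x' hx'
        rw [Real.dist_eq, Real.dist_eq]
        exact hφ x (hJV hx) x' (hJV hx')
      exact this.continuousOn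
    exact ContinuousOn.sub (ContinuousOn.sub (fun x hx => (hf x hx).continuousWithinAt)
      (fun x hx => ((hεx y hy x hx).1).continuousWithinAt)) hφc
  -- existence of zero for each y
  have hex : ∀ y ∈ V, ∃ x ∈ Icc a b, g y x = 0 := by
    intro y hy
    have hga : g y a ≤ 0 := by have := (hbd y hy).1; simp only [hg]; linarith
    have hgb : 0 ≤ g y b := by have := (hbd y hy).2; simp only [hg]; linarith
    have := intermediate_value_Icc hab.le (hgcont y hy)
    obtain ⟨x, hx, hx0⟩ := this ⟨hga, hgb⟩
    exact ⟨x, hx, hx0⟩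
  -- uniqueness of zeros
  have huniq : ∀ y ∈ V, ∀ x ∈ Icc a b, ∀ x' ∈ Icc a b, g y x = 0 → g y x' = 0 → x = x' := by
    intro y hy x hx x' hx' h0 h0'
    rcases lt_trichotomy x x' with h | h | h
    · have := key y hy x hx x' hx' h.le
      nlinarith
    · exact h
    · have := key y hy x' hx' x hx h.le
      nlinarith
  classical
  set ψ : ℝ → ℝ := fun y => if h : y ∈ V then (hex y h).choose else a with hψ
  have hψJ : ∀ y ∈ V, ψ y ∈ Icc a b := by
    intro y hy; simp only [hψ, dif_pos hy]; exact (hex y hy).choose_spec.1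
  have hψ0 : ∀ y ∈ V, g y (ψ y) = 0 := by
    intro y hy; simp only [hψ, dif_pos hy]; exact (hex y hy).choose_spec.2
  have hψeq : ∀ y ∈ V, φ (ψ y) = f (ψ y) - ε (ψ y) y := by
    intro y hy; have := hψ0 y hy; simp only [hg] at this; linarith
  have hlip : ∀ y ∈ V, ∀ y' ∈ V, |ψ y - ψ y'| ≤ (δ / (D - δ - k)) * |y - y'| := by
    intro y hy y' hy'
    have hx := hψJ y hy
    have hx' := hψJ y' hy'
    have hgε : g y (ψ y') - g y' (ψ y') = ε (ψ y') y' - ε (ψ y') y := by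
      simp only [hg]; ring
    have hεb : |g y (ψ y')| ≤ δ * |y - y'| := by
      rw [show g y (ψ y') = g y (ψ y') - g y' (ψ y') from by rw [hψ0 y' hy']; ring, hgε]
      rw [show ε (ψ y') y' - ε (ψ y') y = -(ε (ψ y') y - ε (ψ y') y') from by ring, abs_neg]
      exact hεy (ψ y') hx' y hy y' hy'
    have hmain : (D - δ - k) * |ψ y - ψ y'| ≤ |g y (ψ y')| := by
      rcases le_total (ψ y) (ψ y') with h | h
      · have := key y hy (ψ y) hx (ψ y') hx' h
        rw [hψ0 y hy] at this
        rw [abs_sub_comm, abs_of_nonneg (by linarith)]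
        calc (D - δ - k) * (ψ y' - ψ y) ≤ g y (ψ y') - 0 := this
          _ ≤ |g y (ψ y')| := by rw [sub_zero]; exact le_abs_self _
      · have := key y hy (ψ y') hx' (ψ y) hx h
        rw [hψ0 y hy] at this
        rw [abs_of_nonneg (by linarith)]
        calc (D - δ - k) * (ψ y - ψ y') ≤ 0 - g y (ψ y') := this
          _ ≤ |g y (ψ y')| := by rw [zero_sub]; exact neg_le_abs _
    rw [div_mul_eq_mul_div, le_div_iff₀ hc]
    calc |ψ y - ψ y'| * (D - δ - k) = (D - δ - k) * |ψ y - ψ y'| := by ring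
      _ ≤ |g y (ψ y')| := hmain
      _ ≤ δ * |y - y'| := hεb
  refine ⟨ψ, hψJ, hψeq, hlip, ?_, ?_⟩
  · intro ψ' hψ'J hψ'eq y hy
    apply huniq y hy (ψ' y) (hψ'J y hy) (ψ y) (hψJ y hy)
    · have := hψ'eq y hy; simp only [hg]; linarith
    · exact hψ0 y hy
  · ext ⟨x, y⟩
    simp only [mem_setOf_eq]
    constructor
    · rintro ⟨hx, hy, -, heq⟩
      refine ⟨hy, ?_⟩
      apply huniq y hy x hx (ψ y) (hψJ y hy)
      · simp only [hg]; linarith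
      · exact hψ0 y hy
    · rintro ⟨hy, rfl⟩
      exact ⟨hψJ _ hy, hy, hJV (hψJ _ hy), (hψeq _ hy).symm⟩
end

section
/- Let a < b, set J = [a,b], and let V ⊆ ℝ be an interval with J ⊆ V. Let D > 0, δ ≥ 0, k ≥ 0 with k + δ < D. Let f : ℝ → ℝ be differentiable on J with f'(x) ≥ D for all x ∈ J, and let ε : ℝ × ℝ → ℝ satisfy |ε(x,y) − ε(x',y)| ≤ δ·|x − x'| for all x, x' ∈ J and y ∈ V. Let φ₁, φ₂ : V → ℝ with φ₁ Lipschitz with constant k, and suppose ψ₁, ψ₂ : V → J satisfy φᵢ(ψᵢ(y)) = f(ψᵢ(y)) − ε(ψᵢ(y), y) for all y ∈ V and i = 1,2. Then sup_{y ∈ V} |ψ₁(y) − ψ₂(y)| ≤ (1/(D − δ − k)) · sup_{x ∈ J} |φ₁(x) − φ₂(x)|. In particular, if D − δ − k > 1, the graph transform φ ↦ ψ contracts the C⁰ distance. -/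
open Set

/-- The graph transform of a Hénon-like map contracts the `C⁰` distance:
if `ψᵢ` solves `φᵢ(ψᵢ(y)) = f(ψᵢ(y)) − ε(ψᵢ(y), y)` on `V`, then
`sup_V |ψ₁ − ψ₂| ≤ (1/(D − δ − k)) · sup_J |φ₁ − φ₂|`.  Key step of the
proof of Lemma 3.3 of the paper. -/
theorem graph_transform_contracts
    (a b : ℝ) (hab : a < b)
    (V : Set ℝ) (hV : V.OrdConnected) (hJV : Icc a b ⊆ V)
    (D δ k : ℝ) (hD : 0 < D) (hδ : 0 ≤ δ) (hk : 0 ≤ k) (hkδ : k + δ < D)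
    (f f' : ℝ → ℝ)
    (hf : ∀ x ∈ Icc a b, HasDerivWithinAt f (f' x) (Icc a b) x)
    (hf' : ∀ x ∈ Icc a b, D ≤ f' x)
    (ε : ℝ → ℝ → ℝ)
    (hε : ∀ x ∈ Icc a b, ∀ x' ∈ Icc a b, ∀ y ∈ V,
      |ε x y - ε x' y| ≤ δ * |x - x'|)
    (φ₁ φ₂ : ℝ → ℝ)
    (hφ₁ : ∀ y ∈ V, ∀ y' ∈ V, |φ₁ y - φ₁ y'| ≤ k * |y - y'|)
    (ψ₁ ψ₂ : ℝ → ℝ)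
    (hψ₁J : ∀ y ∈ V, ψ₁ y ∈ Icc a b) (hψ₂J : ∀ y ∈ V, ψ₂ y ∈ Icc a b)
    (heq₁ : ∀ y ∈ V, φ₁ (ψ₁ y) = f (ψ₁ y) - ε (ψ₁ y) y)
    (heq₂ : ∀ y ∈ V, φ₂ (ψ₂ y) = f (ψ₂ y) - ε (ψ₂ y) y)
    (M : ℝ) (hM : ∀ x ∈ Icc a b, |φ₁ x - φ₂ x| ≤ M) :
    ∀ y ∈ V, |ψ₁ y - ψ₂ y| ≤ (1 / (D - δ - k)) * M := by
  intro y hy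
  set u := ψ₁ y with hu_def
  set v := ψ₂ y with hv_def
  have hu : u ∈ Icc a b := hψ₁J y hy
  have hv : v ∈ Icc a b := hψ₂J y hy
  have huV : u ∈ V := hJV hu
  have hvV : v ∈ V := hJV hv
  -- mean value estimate: D * (q - p) ≤ f q - f p for p ≤ q in J
  have key : ∀ p ∈ Icc a b, ∀ q ∈ Icc a b, p ≤ q → D * (q - p) ≤ f q - f p := by
    apply (convex_Icc a b).mul_sub_le_image_sub_of_le_deriv
    · exact fun x hx => (hf x hx).continuousWithinAt
    · intro x hx
      rw [interior_Icc] at hx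
      exact ((hf x (Ioo_subset_Icc_self hx)).hasDerivAt
        (Icc_mem_nhds hx.1 hx.2)).differentiableAt.differentiableWithinAt
    · intro x hx
      rw [interior_Icc] at hx
      rw [((hf x (Ioo_subset_Icc_self hx)).hasDerivAt (Icc_mem_nhds hx.1 hx.2)).deriv]
      exact hf' x (Ioo_subset_Icc_self hx)
  have habs : D * |u - v| ≤ |f u - f v| := by
    rcases le_total v u with h | h
    · have := key v hv u hu h
      rw [abs_of_nonneg (sub_nonneg.2 h), abs_of_nonneg (by nlinarith)]
      linarith
    · have := key u hu v hv h
      rw [abs_of_nonpos (sub_nonpos.2 h), abs_of_nonpos (by nlinarith)]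
      linarith
  have e1 : f u - f v = (φ₁ u - φ₁ v) + (φ₁ v - φ₂ v) + (ε u y - ε v y) := by
    have h1 := heq₁ y hy
    have h2 := heq₂ y hy
    rw [← hu_def] at h1
    rw [← hv_def] at h2
    linarith
  have hlip := hφ₁ u huV v hvV
  have hMv := hM v hv
  have hεuv := hε u hu v hv y hy
  have hbound : |f u - f v| ≤ k * |u - v| + M + δ * |u - v| := by
    rw [e1]
    calc |(φ₁ u - φ₁ v) + (φ₁ v - φ₂ v) + (ε u y - ε v y)|
        ≤ |φ₁ u - φ₁ v| + |φ₁ v - φ₂ v| + |ε u y - ε v y| := by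
          exact (abs_add_le _ _).trans (by gcongr; exact abs_add_le _ _)
      _ ≤ k * |u - v| + M + δ * |u - v| := by gcongr
  have hpos : 0 < D - δ - k := by linarith
  have h2 : (D - δ - k) * |u - v| ≤ M := by linarith
  rw [one_div, ← div_eq_inv_mul, le_div_iff₀ hpos]
  linarith [mul_comm (D - δ - k) |u - v|]
end

section
/- For every D > 1, ρ > 0 and ℓ > 0 there exist K > 0 and δ₀ > 0 such that the following holds for every δ ∈ (0, δ₀]. Let a < b* < b with b* − a ≥ ρ and b − b* ≥ ρ, set J = [a,b], and let V ⊆ ℝ be an interval with J ⊆ V and diam(V) ≤ ℓ. Let f : ℝ → ℝ be differentiable on J with f'(x) ≥ D for x ∈ J, and let ε : ℝ × ℝ → ℝ satisfy, for all x, x' ∈ J and y, y' ∈ V: |ε(x,y)| ≤ δ, |ε(x,y) − ε(x',y)| ≤ δ·|x − x'|, and |ε(x,y) − ε(x,y')| ≤ δ·|y − y'|. Suppose (b*, b*) is a fixed point of the Hénon-like map F(x,y) = (f(x) − ε(x,y), x), i.e. f(b*) − ε(b*, b*) = b*. Then there exists a function ψ : V → J with ψ(b*) = b*, Lipschitz with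 constant K·δ, such that f(ψ(y)) − ε(ψ(y), y) = ψ(ψ(y)) for all y ∈ V; equivalently, the curve {(ψ(y), y) : y ∈ V} is forward invariant under F and contains (b*, b*). Moreover ψ is the unique function V → J with these three properties (fixing b*, Lipschitz constant ≤ K·δ, and satisfying the invariance equation), and every point of the curve {(ψ(y), y) : y ∈ V} converges to (b*, b*) under iteration of F. -/
/-!
The local stable manifold is the fixed point of the graph transform `Γ` acting on graphs
`x = φ y` over `[a, b]` through `(p, p)` with slope `≤ δ`: `Γ φ y` is the `x ∈ [a, b]` for which
`F (x, y)` lies on the graph of `φ`, i.e. `f x - ε x y = φ x`. Because `f' ≥ D` dominates the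
`O(δ)` slopes of `φ` and `ε`, this root exists (intermediate value theorem), is unique, depends
`δ`-Lipschitz on `y`, and the roots for two graphs differ by at most `(D - 2δ)⁻¹` times the
distance of the graphs. Hence the iterates of `Γ` converge uniformly at a geometric rate to the
unique invariant graph `ψ`. On that graph `F` acts by `(ψ y, y) ↦ (ψ (ψ y), ψ y)`, and `ψ` is a
`δ`-contraction fixing `p`, so every orbit tends to `(p, p)`.
-/

open Set Filter Topology

/- Banach's fixed point theorem for a contraction in the sup-distance on `V`, phrased pointwise
so that no metric on the function space is needed. -/
section PointwiseContraction

variable {α : Type*} {V : Set α} {S : Set (α → ℝ)} {Γ : (α → ℝ) → α → ℝ} {c M : ℝ}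

theorem le_pow_mul_of_forall_exists_le_mul {u : α → ℝ} (hc : 0 ≤ c) (hM : ∀ y ∈ V, u y ≤ M)
    (hu : ∀ y ∈ V, ∃ z ∈ V, u y ≤ c * u z) : ∀ n : ℕ, ∀ y ∈ V, u y ≤ c ^ n * M := by
  intro n
  induction n with
  | zero => simpa using hM
  | succ n ih =>
    intro y hy
    obtain ⟨z, hz, hyz⟩ := hu y hy
    calc u y ≤ c * u z := hyz
      _ ≤ c * (c ^ n * M) := by gcongr; exact ih z hz
      _ = c ^ (n + 1) * M := by ring

theorem abs_iterate_sub_le_of_pointwise_contraction (hc : 0 ≤ c) (hΓS : MapsTo Γ S S)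
    (hΓ : ∀ φ ∈ S, ∀ φ' ∈ S, ∀ y ∈ V, ∃ z ∈ V, |Γ φ y - Γ φ' y| ≤ c * |φ z - φ' z|)
    (hM : ∀ φ ∈ S, ∀ φ' ∈ S, ∀ y ∈ V, |φ y - φ' y| ≤ M) (n : ℕ) :
    ∀ φ ∈ S, ∀ φ' ∈ S, ∀ y ∈ V, |Γ^[n] φ y - Γ^[n] φ' y| ≤ c ^ n * M := by
  induction n with
  | zero => simpa using hM
  | succ n ih =>
    intro φ hφ φ' hφ' y hy
    obtain ⟨z, hz, hyz⟩ := hΓ _ (hΓS.iterate n hφ) _ (hΓS.iterate n hφ') y hy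
    rw [Function.iterate_succ_apply', Function.iterate_succ_apply']
    calc _ ≤ c * |Γ^[n] φ z - Γ^[n] φ' z| := hyz
      _ ≤ c * (c ^ n * M) := by gcongr; exact ih φ hφ φ' hφ' z hz
      _ = c ^ (n + 1) * M := by ring

theorem eqOn_of_pointwise_contraction (hc0 : 0 ≤ c) (hc1 : c < 1)
    (hΓ : ∀ φ ∈ S, ∀ φ' ∈ S, ∀ y ∈ V, ∃ z ∈ V, |Γ φ y - Γ φ' y| ≤ c * |φ z - φ' z|)
    (hM : ∀ φ ∈ S, ∀ φ' ∈ S, ∀ y ∈ V, |φ y - φ' y| ≤ M)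
    {ψ ψ' : α → ℝ} (hψ : ψ ∈ S) (hψ' : ψ' ∈ S)
    (hψΓ : EqOn (Γ ψ) ψ V) (hψ'Γ : EqOn (Γ ψ') ψ' V) : EqOn ψ ψ' V := by
  intro y hy
  have hle := le_pow_mul_of_forall_exists_le_mul (u := fun y => |ψ y - ψ' y|) hc0
    (hM ψ hψ ψ' hψ') (fun y hy => by
      simpa only [← hψΓ hy, ← hψ'Γ hy] using hΓ ψ hψ ψ' hψ' y hy)
  have hgeom : Tendsto (fun n : ℕ => c ^ n * M) atTop (𝓝 0) := by
    simpa using (tendsto_pow_atTop_nhds_zero_of_lt_one hc0 hc1).mul_const M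
  have h0 : |ψ y - ψ' y| ≤ 0 := ge_of_tendsto' hgeom fun n => hle n y hy
  exact sub_eq_zero.mp (abs_nonpos_iff.mp h0)

theorem exists_fixed_of_pointwise_contraction (hc0 : 0 ≤ c) (hc1 : c < 1) (hΓS : MapsTo Γ S S)
    (hΓ : ∀ φ ∈ S, ∀ φ' ∈ S, ∀ y ∈ V, ∃ z ∈ V, |Γ φ y - Γ φ' y| ≤ c * |φ z - φ' z|)
    (hM : ∀ φ ∈ S, ∀ φ' ∈ S, ∀ y ∈ V, |φ y - φ' y| ≤ M)
    (hS : ∀ (u : ℕ → α → ℝ) (ψ : α → ℝ), (∀ n, u n ∈ S) →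
      (∀ y ∈ V, Tendsto (u · y) atTop (𝓝 (ψ y))) → ψ ∈ S)
    {φ₀ : α → ℝ} (hφ₀ : φ₀ ∈ S) : ∃ ψ ∈ S, EqOn (Γ ψ) ψ V := by
  set u : ℕ → α → ℝ := fun n => Γ^[n] φ₀
  have hu : ∀ n, u n ∈ S := fun n => hΓS.iterate n hφ₀
  have hgeom : Tendsto (fun n : ℕ => c ^ n * M) atTop (𝓝 0) := by
    simpa using (tendsto_pow_atTop_nhds_zero_of_lt_one hc0 hc1).mul_const M
  have hcauchy : ∀ n m, n ≤ m → ∀ y ∈ V, |u n y - u m y| ≤ c ^ n * M := by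
    intro n m hnm y hy
    obtain ⟨k, rfl⟩ := Nat.exists_eq_add_of_le hnm
    simp only [u, Function.iterate_add_apply]
    exact abs_iterate_sub_le_of_pointwise_contraction hc0 hΓS hΓ hM n φ₀ hφ₀ _
      (hΓS.iterate k hφ₀) y hy
  set ψ : α → ℝ := fun y => limUnder atTop (u · y)
  have hlim : ∀ y ∈ V, Tendsto (u · y) atTop (𝓝 (ψ y)) := fun y hy =>
    (cauchySeq_of_le_tendsto_0' _ (fun n m hnm => by
      simpa only [Real.dist_eq] using hcauchy n m hnm y hy) hgeom).tendsto_limUnder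
  have hrate : ∀ n, ∀ y ∈ V, |u n y - ψ y| ≤ c ^ n * M := fun n y hy =>
    le_of_tendsto ((tendsto_const_nhds.sub (hlim y hy)).abs)
      (eventually_atTop.2 ⟨n, fun m hm => hcauchy n m hm y hy⟩)
  have hψ : ψ ∈ S := hS u ψ hu hlim
  refine ⟨ψ, hψ, fun y hy => tendsto_nhds_unique ?_ ((hlim y hy).comp (tendsto_add_atTop_nat 1))⟩
  -- `u (n + 1) = Γ (u n)` is within `c * c ^ n * M` of `Γ ψ` at `y`
  refine tendsto_iff_dist_tendsto_zero.2 (squeeze_zero (fun _ => dist_nonneg) (fun n => ?_)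
    (by simpa using hgeom.const_mul c))
  obtain ⟨z, hz, hyz⟩ := hΓ _ (hu n) ψ hψ y hy
  rw [Real.dist_eq]
  calc |u (n + 1) y - Γ ψ y| ≤ c * |u n z - ψ z| := by
        simpa only [u, Function.iterate_succ_apply'] using hyz
    _ ≤ c * (c ^ n * M) := by gcongr; exact hrate n z hz

end PointwiseContraction

theorem Convex.mul_sub_le_sub_of_hasDerivWithinAt {s : Set ℝ} (hs : Convex ℝ s) {f f' : ℝ → ℝ}
    {D : ℝ} (hf : ∀ x ∈ s, HasDerivWithinAt f (f' x) s x ∧ D ≤ f' x) :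
    ∀ x ∈ s, ∀ x' ∈ s, x ≤ x' → D * (x' - x) ≤ f x' - f x := by
  have hderiv : ∀ x ∈ interior s, HasDerivAt f (f' x) x := fun x hx =>
    (hf x (interior_subset hx)).1.hasDerivAt (mem_interior_iff_mem_nhds.mp hx)
  exact hs.mul_sub_le_image_sub_of_le_deriv (fun x hx => (hf x hx).1.continuousWithinAt)
    (fun x hx => (hderiv x hx).differentiableAt.differentiableWithinAt)
    (fun x hx => (hderiv x hx).deriv ▸ (hf x (interior_subset hx)).2)

theorem continuousOn_of_abs_sub_le {s : Set ℝ} {g : ℝ → ℝ} {K : ℝ}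
    (hg : ∀ x ∈ s, ∀ x' ∈ s, |g x - g x'| ≤ K * |x - x'|) : ContinuousOn g s :=
  (LipschitzOnWith.of_dist_le' (by simpa only [Real.dist_eq] using hg)).continuousOn

theorem tendsto_iterate_of_dist_le_mul {X : Type*} [PseudoMetricSpace X] {g : X → X} {V : Set X}
    {p : X} {δ : ℝ} (hδ0 : 0 ≤ δ) (hδ1 : δ < 1) (hgV : MapsTo g V V) (hp : p ∈ V) (hgp : g p = p)
    (hg : ∀ y ∈ V, ∀ y' ∈ V, dist (g y) (g y') ≤ δ * dist y y') {y : X} (hy : y ∈ V) :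
    Tendsto (fun n => g^[n] y) atTop (𝓝 p) := by
  have hrate : ∀ n : ℕ, dist (g^[n] y) p ≤ δ ^ n * dist y p := by
    intro n
    induction n with
    | zero => simp
    | succ n ih =>
      calc dist (g^[n + 1] y) p = dist (g (g^[n] y)) (g p) := by
            rw [Function.iterate_succ_apply', hgp]
        _ ≤ δ * dist (g^[n] y) p := hg _ (hgV.iterate n hy) p hp
        _ ≤ δ * (δ ^ n * dist y p) := by gcongr
        _ = δ ^ (n + 1) * dist y p := by ring
  exact tendsto_iff_dist_tendsto_zero.2 (squeeze_zero (fun _ => dist_nonneg) hrate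
    (by simpa using (tendsto_pow_atTop_nhds_zero_of_lt_one hδ0 hδ1).mul_const (dist y p)))

def henonMap (f : ℝ → ℝ) (ε : ℝ → ℝ → ℝ) (q : ℝ × ℝ) : ℝ × ℝ :=
  (f q.1 - ε q.1 q.2, q.1)

theorem henonMap_iterate_of_invariant {f : ℝ → ℝ} {ε : ℝ → ℝ → ℝ} {ψ : ℝ → ℝ} {V : Set ℝ}
    (hψV : MapsTo ψ V V) (hψ : ∀ y ∈ V, f (ψ y) - ε (ψ y) y = ψ (ψ y)) {y : ℝ} (hy : y ∈ V)
    (n : ℕ) : (henonMap f ε)^[n] (ψ y, y) = (ψ^[n + 1] y, ψ^[n] y) := by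
  induction n with
  | zero => rfl
  | succ n ih =>
    rw [Function.iterate_succ_apply', ih, Function.iterate_succ_apply' ψ n, henonMap,
      hψ _ (hψV.iterate n hy), ← Function.iterate_succ_apply' ψ n,
      ← Function.iterate_succ_apply' ψ (n + 1)]

/-- `φ` encodes the graph `{(φ t, t) : t ∈ V}` over the vertical axis. -/
def lipGraphs (V J : Set ℝ) (p δ : ℝ) : Set (ℝ → ℝ) :=
  {φ | MapsTo φ V J ∧ φ p = p ∧ ∀ y ∈ V, ∀ y' ∈ V, |φ y - φ y'| ≤ δ * |y - y'|}

theorem abs_sub_le_of_mem_lipGraphs {V : Set ℝ} {a b p δ : ℝ} {φ φ' : ℝ → ℝ}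
    (hφ : φ ∈ lipGraphs V (Icc a b) p δ) (hφ' : φ' ∈ lipGraphs V (Icc a b) p δ) {y : ℝ}
    (hy : y ∈ V) : |φ y - φ' y| ≤ b - a :=
  abs_sub_le_of_le_of_le (hφ.1 hy).1 (hφ.1 hy).2 (hφ'.1 hy).1 (hφ'.1 hy).2

theorem mem_lipGraphs_of_tendsto {V : Set ℝ} {a b p δ : ℝ} (hp : p ∈ V) {u : ℕ → ℝ → ℝ}
    {ψ : ℝ → ℝ} (hu : ∀ n, u n ∈ lipGraphs V (Icc a b) p δ)
    (hψ : ∀ y ∈ V, Tendsto (u · y) atTop (𝓝 (ψ y))) : ψ ∈ lipGraphs V (Icc a b) p δ := by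
  refine ⟨fun y hy => isClosed_Icc.mem_of_tendsto (hψ y hy) (.of_forall fun n => (hu n).1 hy),
    tendsto_nhds_unique (hψ p hp) ?_, fun y hy y' hy' => ?_⟩
  · simp only [(hu _).2.1, tendsto_const_nhds]
  · exact le_of_tendsto' ((hψ y hy).sub (hψ y' hy')).abs fun n => (hu n).2.2 y hy y' hy'

/-- The pullback under `F(x, y) = (f x - ε x y, x)` of the graph `{(φ t, t)}`: `F (x, y)` lies
on it iff `f x - ε x y = φ x`. -/
noncomputable def graphTransform (J : Set ℝ) (f : ℝ → ℝ) (ε : ℝ → ℝ → ℝ) (φ : ℝ → ℝ) (y : ℝ) : ℝ :=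
  Classical.epsilon fun x => x ∈ J ∧ f x - ε x y = φ x

/-- `D - 2 * δ > 1` is the inverse contraction rate of the graph transform, and the margins
`2 * δ` keep its roots inside `[a, b]`. -/
structure HenonSaddle (D δ a p b : ℝ) (V : Set ℝ) (f : ℝ → ℝ) (ε : ℝ → ℝ → ℝ) : Prop where
  mem_Icc : p ∈ Icc a b
  Icc_subset : Icc a b ⊆ V
  continuousOn : ContinuousOn f (Icc a b)
  expanding : ∀ x ∈ Icc a b, ∀ x' ∈ Icc a b, x ≤ x' → D * (x' - x) ≤ f x' - f x
  eps_bound : ∀ x ∈ Icc a b, ∀ y ∈ V, |ε x y| ≤ δ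
  eps_lip_left : ∀ x ∈ Icc a b, ∀ x' ∈ Icc a b, ∀ y ∈ V, |ε x y - ε x' y| ≤ δ * |x - x'|
  eps_lip_right : ∀ x ∈ Icc a b, ∀ y ∈ V, ∀ y' ∈ V, |ε x y - ε x y'| ≤ δ * |y - y'|
  fixed : f p - ε p p = p
  one_lt : 1 < D - 2 * δ
  two_mul_le_left : 2 * δ ≤ p - a
  two_mul_le_right : 2 * δ ≤ b - p

namespace HenonSaddle

variable {D δ a p b : ℝ} {V : Set ℝ} {f : ℝ → ℝ} {ε : ℝ → ℝ → ℝ}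

theorem mem_V (H : HenonSaddle D δ a p b V f ε) : p ∈ V := H.Icc_subset H.mem_Icc

theorem nonneg (H : HenonSaddle D δ a p b V f ε) : 0 ≤ δ :=
  (abs_nonneg _).trans (H.eps_bound p H.mem_Icc p H.mem_V)

theorem mul_abs_sub_le (H : HenonSaddle D δ a p b V f ε) {x x' : ℝ} (hx : x ∈ Icc a b)
    (hx' : x' ∈ Icc a b) : D * |x - x'| ≤ |f x - f x'| := by
  rcases le_total x x' with h | h
  · calc D * |x - x'| = D * (x' - x) := by rw [abs_sub_comm, abs_of_nonneg (sub_nonneg.2 h)]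
      _ ≤ f x' - f x := H.expanding x hx x' hx' h
      _ ≤ |f x - f x'| := abs_sub_comm (f x) (f x') ▸ le_abs_self _
  · calc D * |x - x'| = D * (x - x') := by rw [abs_of_nonneg (sub_nonneg.2 h)]
      _ ≤ f x - f x' := H.expanding x' hx' x hx h
      _ ≤ |f x - f x'| := le_abs_self _

theorem mul_abs_sub_le_of_root (H : HenonSaddle D δ a p b V f ε) {φ φ' : ℝ → ℝ}
    (hφ : φ ∈ lipGraphs V (Icc a b) p δ) {x x' y y' : ℝ} (hx : x ∈ Icc a b) (hx' : x' ∈ Icc a b)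
    (hy : y ∈ V) (hy' : y' ∈ V) (hr : f x - ε x y = φ x) (hr' : f x' - ε x' y' = φ' x') :
    (D - 2 * δ) * |x - x'| ≤ |φ x' - φ' x'| + δ * |y - y'| := by
  have hsplit : f x - f x' =
      (φ x - φ x') + (φ x' - φ' x') + (ε x y - ε x' y) + (ε x' y - ε x' y') := by linarith
  have hφx := hφ.2.2 x (H.Icc_subset hx) x' (H.Icc_subset hx')
  have hεx := H.eps_lip_left x hx x' hx' y hy
  have hεy := H.eps_lip_right x' hx' y hy y' hy'
  have htri : |f x - f x'| ≤
      |φ x - φ x'| + |φ x' - φ' x'| + |ε x y - ε x' y| + |ε x' y - ε x' y'| := by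
    rw [hsplit]
    exact (abs_add_le _ _).trans (add_le_add_left (abs_add_three _ _ _) _)
  linarith [H.mul_abs_sub_le hx hx']

theorem eq_of_root (H : HenonSaddle D δ a p b V f ε) {φ : ℝ → ℝ}
    (hφ : φ ∈ lipGraphs V (Icc a b) p δ) {x x' y : ℝ} (hx : x ∈ Icc a b) (hx' : x' ∈ Icc a b)
    (hy : y ∈ V) (hr : f x - ε x y = φ x) (hr' : f x' - ε x' y = φ x') : x = x' := by
  have h := H.mul_abs_sub_le_of_root hφ hx hx' hy hy hr hr'
  rw [sub_self, abs_zero, sub_self, abs_zero, mul_zero, add_zero] at h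
  exact sub_eq_zero.mp (abs_nonpos_iff.mp (nonpos_of_mul_nonpos_right h (by linarith [H.one_lt])))

/-- `g x = f x - ε x y - φ x` is within `2 * δ` of `0` at `x = p`, and expansion by at least
`D - 2 * δ ≥ 1` over the distance `≥ 2 * δ` from `p` to `a` and `b` gives `g a ≤ 0 ≤ g b`. -/
theorem exists_root (H : HenonSaddle D δ a p b V f ε) {φ : ℝ → ℝ}
    (hφ : φ ∈ lipGraphs V (Icc a b) p δ) {y : ℝ} (hy : y ∈ V) :
    ∃ x ∈ Icc a b, f x - ε x y = φ x := by
  have hab : a ≤ b := H.mem_Icc.1.trans H.mem_Icc.2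
  have haJ : a ∈ Icc a b := left_mem_Icc.2 hab
  have hbJ : b ∈ Icc a b := right_mem_Icc.2 hab
  have hcont : ContinuousOn (fun x => f x - ε x y - φ x) (Icc a b) :=
    (H.continuousOn.sub (continuousOn_of_abs_sub_le fun x hx x' hx' =>
      H.eps_lip_left x hx x' hx' y hy)).sub
      (continuousOn_of_abs_sub_le fun x hx x' hx' =>
        hφ.2.2 x (H.Icc_subset hx) x' (H.Icc_subset hx'))
  have hεp := abs_le.mp (H.eps_bound p H.mem_Icc p H.mem_V)
  have hεy := abs_le.mp (H.eps_bound p H.mem_Icc y hy)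
  have hga : f a - ε a y - φ a ≤ 0 := by
    have hpa : 0 ≤ p - a := sub_nonneg.2 H.mem_Icc.1
    have hf := H.expanding a haJ p H.mem_Icc H.mem_Icc.1
    have hε := abs_le.mp (H.eps_lip_left p H.mem_Icc a haJ y hy)
    have hφa := abs_le.mp (hφ.2.2 p H.mem_V a (H.Icc_subset haJ))
    rw [abs_of_nonneg hpa] at hε hφa
    linarith [le_mul_of_one_le_left hpa H.one_lt.le, H.two_mul_le_left, H.fixed, hφ.2.1]
  have hgb : 0 ≤ f b - ε b y - φ b := by
    have hbp : 0 ≤ b - p := sub_nonneg.2 H.mem_Icc.2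
    have hf := H.expanding p H.mem_Icc b hbJ H.mem_Icc.2
    have hε := abs_le.mp (H.eps_lip_left b hbJ p H.mem_Icc y hy)
    have hφb := abs_le.mp (hφ.2.2 b (H.Icc_subset hbJ) p H.mem_V)
    rw [abs_of_nonneg hbp] at hε hφb
    linarith [le_mul_of_one_le_left hbp H.one_lt.le, H.two_mul_le_right, H.fixed, hφ.2.1]
  obtain ⟨x, hx, hgx⟩ := intermediate_value_Icc hab hcont ⟨hga, hgb⟩
  exact ⟨x, hx, by linarith [hgx]⟩

theorem graphTransform_spec (H : HenonSaddle D δ a p b V f ε) {φ : ℝ → ℝ}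
    (hφ : φ ∈ lipGraphs V (Icc a b) p δ) {y : ℝ} (hy : y ∈ V) :
    graphTransform (Icc a b) f ε φ y ∈ Icc a b ∧
      f (graphTransform (Icc a b) f ε φ y) - ε (graphTransform (Icc a b) f ε φ y) y =
        φ (graphTransform (Icc a b) f ε φ y) := by
  obtain ⟨x, hx, hr⟩ := H.exists_root hφ hy
  exact Classical.epsilon_spec (p := fun x => x ∈ Icc a b ∧ f x - ε x y = φ x) ⟨x, hx, hr⟩

theorem eq_graphTransform_of_root (H : HenonSaddle D δ a p b V f ε) {φ : ℝ → ℝ}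
    (hφ : φ ∈ lipGraphs V (Icc a b) p δ) {x y : ℝ} (hx : x ∈ Icc a b) (hy : y ∈ V)
    (hr : f x - ε x y = φ x) : x = graphTransform (Icc a b) f ε φ y :=
  H.eq_of_root hφ hx (H.graphTransform_spec hφ hy).1 hy hr (H.graphTransform_spec hφ hy).2

theorem graphTransform_eq_iff (H : HenonSaddle D δ a p b V f ε) {φ : ℝ → ℝ}
    (hφ : φ ∈ lipGraphs V (Icc a b) p δ) {y : ℝ} (hy : y ∈ V) :
    graphTransform (Icc a b) f ε φ y = φ y ↔ f (φ y) - ε (φ y) y = φ (φ y) := by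
  refine ⟨fun h => h ▸ (H.graphTransform_spec hφ hy).2, fun h => ?_⟩
  exact (H.eq_graphTransform_of_root hφ (hφ.1 hy) hy h).symm

theorem mapsTo_graphTransform (H : HenonSaddle D δ a p b V f ε) :
    MapsTo (graphTransform (Icc a b) f ε) (lipGraphs V (Icc a b) p δ)
      (lipGraphs V (Icc a b) p δ) := by
  intro φ hφ
  refine ⟨fun y hy => (H.graphTransform_spec hφ hy).1, ?_, fun y hy y' hy' => ?_⟩
  · exact (H.eq_graphTransform_of_root hφ H.mem_Icc H.mem_V (H.fixed.trans hφ.2.1.symm)).symm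
  · have h := H.mul_abs_sub_le_of_root hφ (H.graphTransform_spec hφ hy).1
      (H.graphTransform_spec hφ hy').1 hy hy' (H.graphTransform_spec hφ hy).2
      (H.graphTransform_spec hφ hy').2
    rw [sub_self, abs_zero, zero_add] at h
    exact (le_mul_of_one_le_left (abs_nonneg _) H.one_lt.le).trans h

theorem abs_graphTransform_sub_le (H : HenonSaddle D δ a p b V f ε) :
    ∀ φ ∈ lipGraphs V (Icc a b) p δ, ∀ φ' ∈ lipGraphs V (Icc a b) p δ, ∀ y ∈ V, ∃ z ∈ V,
      |graphTransform (Icc a b) f ε φ y - graphTransform (Icc a b) f ε φ' y| ≤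
        (D - 2 * δ)⁻¹ * |φ z - φ' z| := by
  intro φ hφ φ' hφ' y hy
  refine ⟨_, H.Icc_subset (H.graphTransform_spec hφ' hy).1, ?_⟩
  have h := H.mul_abs_sub_le_of_root hφ (H.graphTransform_spec hφ hy).1
    (H.graphTransform_spec hφ' hy).1 hy hy (H.graphTransform_spec hφ hy).2
    (H.graphTransform_spec hφ' hy).2
  rw [sub_self, abs_zero, mul_zero, add_zero] at h
  rw [inv_mul_eq_div, le_div_iff₀ (by linarith [H.one_lt])]
  linarith

theorem exists_invariant_graph (H : HenonSaddle D δ a p b V f ε) :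
    ∃ ψ ∈ lipGraphs V (Icc a b) p δ, (∀ y ∈ V, f (ψ y) - ε (ψ y) y = ψ (ψ y)) ∧
      ∀ ψ' ∈ lipGraphs V (Icc a b) p δ, (∀ y ∈ V, f (ψ' y) - ε (ψ' y) y = ψ' (ψ' y)) →
        EqOn ψ' ψ V := by
  have hc0 : 0 ≤ (D - 2 * δ)⁻¹ := inv_nonneg.2 (by linarith [H.one_lt])
  have hc1 : (D - 2 * δ)⁻¹ < 1 := inv_lt_one_of_one_lt₀ H.one_lt
  have hM : ∀ φ ∈ lipGraphs V (Icc a b) p δ, ∀ φ' ∈ lipGraphs V (Icc a b) p δ, ∀ y ∈ V,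
      |φ y - φ' y| ≤ b - a := fun φ hφ φ' hφ' y hy => abs_sub_le_of_mem_lipGraphs hφ hφ' hy
  have hconst : (fun _ => p) ∈ lipGraphs V (Icc a b) p δ :=
    ⟨fun _ _ => H.mem_Icc, rfl, fun _ _ _ _ => by
      rw [sub_self, abs_zero]; exact mul_nonneg H.nonneg (abs_nonneg _)⟩
  obtain ⟨ψ, hψ, hψΓ⟩ := exists_fixed_of_pointwise_contraction hc0 hc1 H.mapsTo_graphTransform
    H.abs_graphTransform_sub_le hM
    (fun u ψ hu hlim => mem_lipGraphs_of_tendsto H.mem_V hu hlim) hconst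
  refine ⟨ψ, hψ, fun y hy => (H.graphTransform_eq_iff hψ hy).1 (hψΓ hy),
    fun ψ' hψ' hinv => ?_⟩
  exact eqOn_of_pointwise_contraction hc0 hc1
    H.abs_graphTransform_sub_le hM hψ' hψ
    (fun y hy => (H.graphTransform_eq_iff hψ' hy).2 (hinv y hy)) hψΓ

end HenonSaddle

/-- Generic form of Lemma 3.3 of the paper: for a Hénon-like map
`F(x,y) = (f(x) − ε(x,y), x)` with `f` expanding near a saddle fixed point
`(b*, b*)`, the local stable manifold is the graph of a function over the
vertical axis with slope `O(δ)`, it is the unique such invariant Lipschitz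
graph through the fixed point, and all its points converge to the fixed
point under iteration. -/
theorem local_stable_manifold :
    ∀ D ρ ℓ : ℝ, 1 < D → 0 < ρ → 0 < ℓ →
    ∃ K δ₀ : ℝ, 0 < K ∧ 0 < δ₀ ∧
      ∀ δ : ℝ, 0 < δ → δ ≤ δ₀ →
      ∀ a bstar b : ℝ, a < bstar → bstar < b → ρ ≤ bstar - a → ρ ≤ b - bstar →
      ∀ V : Set ℝ, V.OrdConnected → Icc a b ⊆ V → Metric.diam V ≤ ℓ →
      ∀ f f' : ℝ → ℝ,
        (∀ x ∈ Icc a b, HasDerivWithinAt f (f' x) (Icc a b) x ∧ D ≤ f' x) →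
      ∀ ε : ℝ → ℝ → ℝ,
        (∀ x ∈ Icc a b, ∀ y ∈ V, |ε x y| ≤ δ) →
        (∀ x ∈ Icc a b, ∀ x' ∈ Icc a b, ∀ y ∈ V, |ε x y - ε x' y| ≤ δ * |x - x'|) →
        (∀ x ∈ Icc a b, ∀ y ∈ V, ∀ y' ∈ V, |ε x y - ε x y'| ≤ δ * |y - y'|) →
        f bstar - ε bstar bstar = bstar →
        ∃ ψ : ℝ → ℝ,
          (∀ y ∈ V, ψ y ∈ Icc a b) ∧
          ψ bstar = bstar ∧
          (∀ y ∈ V, ∀ y' ∈ V, |ψ y - ψ y'| ≤ K * δ * |y - y'|) ∧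
          (∀ y ∈ V, f (ψ y) - ε (ψ y) y = ψ (ψ y)) ∧
          (∀ ψ' : ℝ → ℝ, (∀ y ∈ V, ψ' y ∈ Icc a b) → ψ' bstar = bstar →
            (∀ y ∈ V, ∀ y' ∈ V, |ψ' y - ψ' y'| ≤ K * δ * |y - y'|) →
            (∀ y ∈ V, f (ψ' y) - ε (ψ' y) y = ψ' (ψ' y)) →
            ∀ y ∈ V, ψ' y = ψ y) ∧
          (∀ y ∈ V,
            Filter.Tendsto
              (fun n => (fun p : ℝ × ℝ => (f p.1 - ε p.1 p.2, p.1))^[n] (ψ y, y))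
              Filter.atTop (nhds (bstar, bstar))) := by
  intro D ρ ℓ hD hρ _
  refine ⟨1, min (ρ / 2) (min ((D - 1) / 4) (1 / 2)), one_pos, by positivity, ?_⟩
  intro δ hδ hδ₀ a p b hap hpb hρa hρb V _ hJV _ f f' hf ε hε hεx hεy hfix
  simp only [le_min_iff] at hδ₀
  have H : HenonSaddle D δ a p b V f ε :=
    { mem_Icc := ⟨hap.le, hpb.le⟩
      Icc_subset := hJV
      continuousOn := fun x hx => (hf x hx).1.continuousWithinAt
      expanding := (convex_Icc a b).mul_sub_le_sub_of_hasDerivWithinAt hf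
      eps_bound := hε
      eps_lip_left := hεx
      eps_lip_right := hεy
      fixed := hfix
      one_lt := by linarith
      two_mul_le_left := by linarith
      two_mul_le_right := by linarith }
  obtain ⟨ψ, hψ, hinv, huniq⟩ := H.exists_invariant_graph
  simp only [one_mul]
  refine ⟨ψ, hψ.1, hψ.2.1, hψ.2.2, hinv, fun ψ' h₁ h₂ h₃ h₄ => huniq ψ' ⟨h₁, h₂, h₃⟩ h₄,
    fun y hy => ?_⟩
  have hψV : MapsTo ψ V V := fun y hy => hJV (hψ.1 hy)
  have hlim : ∀ y ∈ V, Tendsto (fun n => ψ^[n] y) atTop (𝓝 p) := fun y hy =>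
    tendsto_iterate_of_dist_le_mul hδ.le (by linarith) hψV H.mem_V hψ.2.1
      (by simpa only [Real.dist_eq] using hψ.2.2) hy
  change Tendsto (fun n => (henonMap f ε)^[n] (ψ y, y)) atTop (𝓝 (p, p))
  simp only [henonMap_iterate_of_invariant hψV hinv hy]
  exact ((hlim y hy).comp (tendsto_add_atTop_nat 1)).prodMk_nhds (hlim y hy)
end

section
/- Let I ⊆ ℝ, b > 0, and let f, a : ℝ → ℝ and m : ℝ × ℝ → ℝ. Let 0 < a₀ ≤ a₁, m₀ ≥ 0, L ≥ 0 and G ≥ 0 be constants with m₀ + G·L < 1, and assume for all y ∈ I: a₀ ≤ a(y) ≤ a₁; |m(y,z)| ≤ m₀ for all z ∈ ℝ; and |m(y,z) − m(y,z')| ≤ L·|z − z'| for all z, z' ∈ ℝ. Let γ, γ∞ : I → ℝ with |γ∞(y)| ≤ G for all y ∈ I, and define Γ(y) = f(y) − b·a(y)·γ(y)·(1 + m(y, γ(y))) and Γ∞(y) = f(y) − b·a(y)·γ∞(y)·(1 + m(y, γ∞(y))). Then for every y ∈ I: b·a₀·(1 − m₀ − G·L)·|γ(y) − γ∞(y)|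 ≤ |Γ(y) − Γ∞(y)| ≤ b·a₁·(1 + m₀ + G·L)·|γ(y) − γ∞(y)|. -/
open Set

/-- `C⁰` content of Proposition 7.1 of the paper: for an infinitely
renormalizable Hénon-like map with `ε(x,y) = b·a(x)·y·(1 + m(x,y))`, the
images `Γ(y) = f(y) − b·a(y)·γ(y)·(1 + m(y, γ(y)))` of two graphs `γ`, `γ'`
over the horizontal axis satisfy two-sided bounds proportional to
`b·|γ(y) − γ'(y)|`. -/
theorem image_curves_contract
    (I : Set ℝ) (b : ℝ) (hb : 0 < b)
    (f a : ℝ → ℝ) (m : ℝ → ℝ → ℝ)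
    (a₀ a₁ m₀ L G : ℝ)
    (ha₀ : 0 < a₀) (ha₀₁ : a₀ ≤ a₁) (hm₀ : 0 ≤ m₀) (hL : 0 ≤ L) (hG : 0 ≤ G)
    (hsmall : m₀ + G * L < 1)
    (ha : ∀ y ∈ I, a₀ ≤ a y ∧ a y ≤ a₁)
    (hm : ∀ y ∈ I, ∀ z : ℝ, |m y z| ≤ m₀)
    (hmL : ∀ y ∈ I, ∀ z z' : ℝ, |m y z - m y z'| ≤ L * |z - z'|)
    (γ γ' : ℝ → ℝ) (hγ' : ∀ y ∈ I, |γ' y| ≤ G)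
    (Γ Γ' : ℝ → ℝ)
    (hΓ : ∀ y, Γ y = f y - b * a y * γ y * (1 + m y (γ y)))
    (hΓ' : ∀ y, Γ' y = f y - b * a y * γ' y * (1 + m y (γ' y))) :
    ∀ y ∈ I,
      b * a₀ * (1 - m₀ - G * L) * |γ y - γ' y| ≤ |Γ y - Γ' y| ∧
      |Γ y - Γ' y| ≤ b * a₁ * (1 + m₀ + G * L) * |γ y - γ' y| := by
  intro y hy
  obtain ⟨ha0, ha1⟩ := ha y hy
  set u := γ y with hu
  set v := γ' y with hv
  set E : ℝ := (u - v) * (1 + m y u) + v * (m y u - m y v) with hE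
  have hD : Γ y - Γ' y = -(b * a y * E) := by
    rw [hΓ, hΓ', hE]; ring
  have hba : 0 ≤ b * a y := le_of_lt (mul_pos hb (lt_of_lt_of_le ha₀ ha0))
  have habs : |Γ y - Γ' y| = b * a y * |E| := by
    rw [hD, abs_neg, abs_mul, abs_of_nonneg hba]
  set d := |u - v| with hd
  have hd0 : 0 ≤ d := abs_nonneg _
  have h1 : |m y u| ≤ m₀ := hm y hy u
  have h2 : |m y u - m y v| ≤ L * d := hmL y hy u v
  have h3 : |v| ≤ G := hγ' y hy
  -- upper bound on |E|
  have hEup : |E| ≤ (1 + m₀ + G * L) * d := by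
    calc |E| ≤ |(u - v) * (1 + m y u)| + |v * (m y u - m y v)| := abs_add_le _ _
      _ = d * |1 + m y u| + |v| * |m y u - m y v| := by rw [abs_mul, abs_mul]
      _ ≤ d * (1 + m₀) + G * (L * d) := by
          have : |1 + m y u| ≤ 1 + m₀ := by
            calc |1 + m y u| ≤ |(1:ℝ)| + |m y u| := abs_add_le _ _
              _ ≤ 1 + m₀ := by simp; exact h1
          gcongr
      _ = (1 + m₀ + G * L) * d := by ring
  -- lower bound on |E|
  have hElow : (1 - m₀ - G * L) * d ≤ |E| := by
    have hrest : |(u - v) * m y u + v * (m y u - m y v)| ≤ (m₀ + G * L) * d := by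
      calc |(u - v) * m y u + v * (m y u - m y v)|
          ≤ |(u - v) * m y u| + |v * (m y u - m y v)| := abs_add_le _ _
        _ = d * |m y u| + |v| * |m y u - m y v| := by rw [abs_mul, abs_mul]
        _ ≤ d * m₀ + G * (L * d) := by
            gcongr
        _ = (m₀ + G * L) * d := by ring
    have hEeq : E = (u - v) + ((u - v) * m y u + v * (m y u - m y v)) := by
      rw [hE]; ring
    have h4 : E + -((u - v) * m y u + v * (m y u - m y v)) = u - v := by
      rw [hEeq]; ring
    have hkey : d ≤ |E| + |(u - v) * m y u + v * (m y u - m y v)| := by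
      calc d = |E + -((u - v) * m y u + v * (m y u - m y v))| := by rw [h4]
        _ ≤ |E| + |-((u - v) * m y u + v * (m y u - m y v))| := abs_add_le _ _
        _ = |E| + |(u - v) * m y u + v * (m y u - m y v)| := by rw [abs_neg]
    linarith
  constructor
  · rw [habs]
    calc b * a₀ * (1 - m₀ - G * L) * d ≤ b * a y * ((1 - m₀ - G * L) * d) := by
          have h5 : 0 ≤ (1 - m₀ - G * L) * d := by
            apply mul_nonneg _ hd0; linarith
          nlinarith [mul_le_mul_of_nonneg_left ha0 hb.le]
      _ ≤ b * a y * |E| := by gcongr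
  · rw [habs]
    calc b * a y * |E| ≤ b * a y * ((1 + m₀ + G * L) * d) := by gcongr
      _ ≤ b * a₁ * (1 + m₀ + G * L) * d := by
          have h6 : 0 ≤ (1 + m₀ + G * L) * d := by positivity
          nlinarith [mul_le_mul_of_nonneg_right (mul_le_mul_of_nonneg_left ha1 hb.le) h6]
end

section
/- Let 0 < λ < 1 < μ with (log λ)/(log μ) irrational, let C > 0, let ρ ∈ (0,1), and let (e_j)_{j∈ℕ} be a sequence of reals with |e_j| ≤ ρ^j for every j. Then the closure of the set {C·(1 + e_j)·λ^j·μ^s : j ∈ ℕ, s ∈ ℕ} contains the interval (0, ∞). -/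
/-!
Taking logarithms, the values become `log (C (1 + e_j)) + j log λ + s log μ`. Since
`log λ / log μ` is irrational, the `ℤ`-multiples of `log λ` are dense in the circle
`ℝ / (log μ) ℤ`, and in a compact group the closure of a `ℤ`-orbit consists of cluster points
of the `ℕ`-orbit as `j → ∞`. So `j` can be taken so large that `log (1 + e_j)` is negligible
and that the integer `s` bringing `j log λ + s log μ` near the target, which grows like
`-j log λ / log μ`, is positive. Exponentiating turns density in `ℝ` into density in `(0, ∞)`.
-/

open Filter Set Metric
open scoped Topology

theorem frequently_exists_abs_nat_mul_add_int_mul_sub_lt {a b : ℝ} (ha : 0 < a)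
    (hab : Irrational (b / a)) (t : ℝ) {ε : ℝ} (hε : 0 < ε) :
    ∃ᶠ j : ℕ in atTop, ∃ s : ℤ, |j * b + s * a - t| < ε := by
  have : Fact (0 < a) := ⟨ha⟩
  have hdense : DenseRange (· • (b : AddCircle a) : ℤ → AddCircle a) :=
    AddCircle.denseRange_zsmul_coe_iff.2 hab
  have hcluster : MapClusterPt (t : AddCircle a) atTop (· • (b : AddCircle a) : ℕ → _) :=
    ((mapClusterPt_atTop_nsmul_tfae _ _).out 3 0).1 (hdense _)
  refine (hcluster.frequently (ball_mem_nhds _ hε)).mono fun j hj => ?_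
  refine ⟨-round (a⁻¹ * (j * b - t)), ?_⟩
  rw [dist_eq_norm, ← AddCircle.coe_nsmul, ← AddCircle.coe_sub, AddCircle.norm_eq,
    nsmul_eq_mul] at hj
  convert hj using 2
  push_cast
  ring

theorem frequently_exists_abs_nat_mul_add_nat_mul_sub_lt {a b : ℝ} (ha : 0 < a) (hb : b < 0)
    (hab : Irrational (b / a)) (t : ℝ) {ε : ℝ} (hε : 0 < ε) :
    ∃ᶠ j : ℕ in atTop, ∃ s : ℕ, |j * b + s * a - t| < ε := by
  have hlarge : ∀ᶠ j : ℕ in atTop, ε - t < -(j * b) :=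
    ((tendsto_natCast_atTop_atTop.atTop_mul_const (neg_pos.2 hb)).eventually_gt_atTop
      (ε - t)).mono fun j hj => by linarith
  refine ((frequently_exists_abs_nat_mul_add_int_mul_sub_lt ha hab t hε).and_eventually
    hlarge).mono ?_
  rintro j ⟨⟨s, hs⟩, hj⟩
  have hs_pos : 0 < (s : ℝ) * a := by linarith [(abs_lt.1 hs).1]
  lift s to ℕ using (Int.cast_pos.1 (pos_of_mul_pos_left hs_pos ha.le)).le
  exact ⟨s, by exact_mod_cast hs⟩

theorem dense_setOf_add_nat_mul_add_nat_mul {a b c : ℝ} {f : ℕ → ℝ} {P : ℕ → Prop}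
    (ha : 0 < a) (hb : b < 0) (hab : Irrational (b / a)) (hf : Tendsto f atTop (𝓝 c))
    (hP : ∀ᶠ j in atTop, P j) :
    Dense {u | ∃ j s : ℕ, P j ∧ u = f j + j * b + s * a} := by
  refine Metric.dense_iff.2 fun t ε hε => ?_
  have hfc : ∀ᶠ j in atTop, |f j - c| < ε / 2 :=
    (Metric.tendsto_nhds.1 hf _ (half_pos hε)).mono fun j hj => by rwa [← Real.dist_eq]
  obtain ⟨j, ⟨s, hs⟩, hj, hPj⟩ :=
    ((frequently_exists_abs_nat_mul_add_nat_mul_sub_lt ha hb hab (t - c)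
      (half_pos hε)).and_eventually (hfc.and hP)).exists
  refine ⟨_, ?_, j, s, hPj, rfl⟩
  rw [mem_ball, Real.dist_eq]
  calc |f j + j * b + s * a - t| = |(f j - c) + (j * b + s * a - (t - c))| := by ring_nf
    _ ≤ |f j - c| + |j * b + s * a - (t - c)| := abs_add_le _ _
    _ < ε := by linarith

/-- Density with exponentially small multiplicative errors, as in the proof
of Theorem 6.1 of the paper: if `0 < λ < 1 < μ` with `log λ / log μ`
irrational, and `|e_j| ≤ ρ^j`, then the values `C·(1 + e_j)·λ^j·μ^s`
are dense in `(0, ∞)`. -/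
theorem dense_orbit_with_errors
    (lam μ C ρ : ℝ)
    (hlam0 : 0 < lam) (hlam1 : lam < 1) (hμ : 1 < μ)
    (hirr : Irrational (Real.log lam / Real.log μ))
    (hC : 0 < C) (hρ0 : 0 < ρ) (hρ1 : ρ < 1)
    (e : ℕ → ℝ) (he : ∀ j, |e j| ≤ ρ ^ j) :
    Set.Ioi (0 : ℝ) ⊆
      closure {x : ℝ | ∃ j s : ℕ, x = C * (1 + e j) * lam ^ j * μ ^ s} := by
  have he0 : Tendsto e atTop (𝓝 0) :=
    squeeze_zero_norm he (tendsto_pow_atTop_nhds_zero_of_lt_one hρ0.le hρ1)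
  have hCe : Tendsto (fun j => C * (1 + e j)) atTop (𝓝 C) := by
    simpa using (he0.const_add 1).const_mul C
  have hdense : Dense {u | ∃ j s : ℕ, 0 < C * (1 + e j) ∧
      u = Real.log (C * (1 + e j)) + j * Real.log lam + s * Real.log μ} :=
    dense_setOf_add_nat_mul_add_nat_mul (Real.log_pos hμ) (Real.log_neg hlam0 hlam1) hirr
      ((Real.continuousAt_log hC.ne').tendsto.comp hCe) (hCe.eventually_const_lt hC)
  calc Ioi 0 = Real.exp '' closure _ := by rw [hdense.closure_eq, image_univ, Real.range_exp]
    _ ⊆ closure (Real.exp '' _) := image_closure_subset_closure_image Real.continuous_exp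
    _ ⊆ _ := by
      refine closure_mono ?_
      rintro _ ⟨_, ⟨j, s, hpos, rfl⟩, rfl⟩
      refine ⟨j, s, ?_⟩
      simp only [Real.exp_add, Real.exp_log hpos, Real.exp_nat_mul,
        Real.exp_log hlam0, Real.exp_log (zero_lt_one.trans hμ)]
end

section
/- Let f : ℝ → ℝ be differentiable, let γ : ℝ × ℝ → ℝ be continuous, let λ : ℝ → ℝ be differentiable at 0 with λ(0) = λ₀ ≠ 0, and let φ : ℝ × ℝ → ℝ be continuously differentiable, satisfying φ(t, λ(t)·s) = f(φ(t,s)) − t·γ(φ(t,s), φ(t, s/λ(t))) for all t in a neighborhood of 0 and all s ∈ ℝ. Write φ₀ = φ(0,·), ψ(s) = ∂φ/∂t(0,s), and let s_c ∈ ℝ with f'(φ₀(s_c)) = 0. Then φ₀'(λ₀·s_c) = 0 and ψ(λ₀·s_c) = −γ(φ₀(s_c), φ₀(s_c/λ₀)). -/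
/-!
At `t = 0` the functional equation reads `φ₀ (λ₀ s) = f (φ₀ s)`; differentiating in `s` at `s_c`,
where `f' (φ₀ s_c) = 0`, gives `λ₀ φ₀' (λ₀ s_c) = 0`. Differentiating the equation at `s = s_c`
in `t` at `t = 0`, the left side contributes `ψ (λ₀ s_c) + λ'(0) s_c φ₀' (λ₀ s_c) = ψ (λ₀ s_c)`,
while on the right `f' (φ₀ s_c)` kills the first term and `t ↦ t γ(…)` has derivative
`γ (c, c₋₁)` at `0`, which needs only continuity of `γ(…)` in `t`.
-/

open Filter Topology

section

variable {𝕜 F : Type*} [NontriviallyNormedField 𝕜] [NormedAddCommGroup F] [NormedSpace 𝕜 F]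

theorem hasDerivAt_sub_smul_of_continuousAt {g : 𝕜 → F} {a : 𝕜} (hg : ContinuousAt g a) :
    HasDerivAt (fun t => (t - a) • g t) (g a) a := by
  rw [hasDerivAt_iff_tendsto_slope]
  refine (hg.tendsto.mono_left nhdsWithin_le_nhds).congr' ?_
  filter_upwards [self_mem_nhdsWithin] with t ht
  rw [slope_def_module, sub_self, zero_smul, sub_zero, smul_smul,
    inv_mul_cancel₀ (sub_ne_zero.mpr ht), one_smul]

theorem HasFDerivAt.hasDerivAt_comp_prodMk {φ : 𝕜 → 𝕜 → F} {L : 𝕜 × 𝕜 →L[𝕜] F}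
    {u v : 𝕜 → 𝕜} {u' v' x : 𝕜} (hφ : HasFDerivAt (fun p : 𝕜 × 𝕜 => φ p.1 p.2) L (u x, v x))
    (hu : HasDerivAt u u' x) (hv : HasDerivAt v v' x) :
    HasDerivAt (fun y => φ (u y) (v y)) (u' • L (1, 0) + v' • L (0, 1)) x := by
  have hsplit : ((u', v') : 𝕜 × 𝕜) = u' • (1, 0) + v' • (0, 1) := by simp
  have hcomp := hφ.comp_hasDerivAt x (hu.prodMk hv)
  rwa [hsplit, map_add, map_smul, map_smul] at hcomp

theorem HasFDerivAt.hasDerivAt_partial_fst {φ : 𝕜 → 𝕜 → F} {L : 𝕜 × 𝕜 →L[𝕜] F} {a b : 𝕜}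
    (hφ : HasFDerivAt (fun p : 𝕜 × 𝕜 => φ p.1 p.2) L (a, b)) :
    HasDerivAt (fun t => φ t b) (L (1, 0)) a := by
  simpa using hφ.hasDerivAt_comp_prodMk (hasDerivAt_id a) (hasDerivAt_const a b)

theorem HasFDerivAt.hasDerivAt_partial_snd {φ : 𝕜 → 𝕜 → F} {L : 𝕜 × 𝕜 →L[𝕜] F} {a b : 𝕜}
    (hφ : HasFDerivAt (fun p : 𝕜 × 𝕜 => φ p.1 p.2) L (a, b)) :
    HasDerivAt (φ a) (L (0, 1)) b := by
  simpa using hφ.hasDerivAt_comp_prodMk (hasDerivAt_const b a) (hasDerivAt_id b)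

theorem HasFDerivAt.hasDerivAt_comp_of_deriv_partial_snd_eq_zero {φ : 𝕜 → 𝕜 → F}
    {L : 𝕜 × 𝕜 →L[𝕜] F} {v : 𝕜 → 𝕜} {a : 𝕜}
    (hφ : HasFDerivAt (fun p : 𝕜 × 𝕜 => φ p.1 p.2) L (a, v a)) (hv : DifferentiableAt 𝕜 v a)
    (hsnd : deriv (φ a) (v a) = 0) :
    HasDerivAt (fun t => φ t (v t)) (deriv (fun t => φ t (v a)) a) a := by
  have hL₂ : L (0, 1) = 0 := hφ.hasDerivAt_partial_snd.deriv.symm.trans hsnd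
  have hchain := hφ.hasDerivAt_comp_prodMk (hasDerivAt_id a) hv.hasDerivAt
  rwa [hL₂, smul_zero, add_zero, one_smul, ← hφ.hasDerivAt_partial_fst.deriv] at hchain

theorem Function.Semiconj.deriv_const_mul_eq_zero {φ f : 𝕜 → 𝕜} {c s : 𝕜}
    (h : Function.Semiconj φ (c * ·) f) (hc : c ≠ 0) (hf : DifferentiableAt 𝕜 f (φ s))
    (hφ : DifferentiableAt 𝕜 φ s) (hcrit : deriv f (φ s) = 0) : deriv φ (c * s) = 0 := by
  by_cases hφc : DifferentiableAt 𝕜 φ (c * s)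
  · have hlhs : HasDerivAt (fun x => φ (c * x)) (deriv φ (c * s) * c) s :=
      hφc.hasDerivAt.comp s ((hasDerivAt_id s).const_mul c |>.congr_deriv (mul_one c))
    have hrhs : HasDerivAt (fun x => φ (c * x)) (deriv f (φ s) * deriv φ s) s :=
      (hf.hasDerivAt.comp s hφ.hasDerivAt).congr_of_eventuallyEq (.of_forall h.eq)
    have hprod := hlhs.unique hrhs
    rw [hcrit, zero_mul] at hprod
    exact (mul_eq_zero.mp hprod).resolve_right hc
  · exact deriv_zero_of_not_differentiableAt hφc

end

/-- Equation (psi(v)) of the appendix of the paper: evaluating the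
variational equation at a parameter `s_c` over the critical point of `f`,
both first-order terms vanish, giving `φ₀'(λ₀ s_c) = 0` and
`ψ(λ₀ s_c) = −γ(c, c₋₁)` with `c = φ₀(s_c)` and `c₋₁ = φ₀(s_c/λ₀)`. -/
theorem variational_equation_at_critical_point
    (f : ℝ → ℝ) (hf : Differentiable ℝ f)
    (γ : ℝ → ℝ → ℝ) (hγ : Continuous fun p : ℝ × ℝ => γ p.1 p.2)
    (l : ℝ → ℝ) (lam₀ : ℝ) (hl0 : l 0 = lam₀) (hlam₀ : lam₀ ≠ 0)
    (hl : DifferentiableAt ℝ l 0)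
    (φ : ℝ → ℝ → ℝ) (hφ : ContDiff ℝ 1 (fun p : ℝ × ℝ => φ p.1 p.2))
    (heq : ∀ᶠ t in nhds 0, ∀ s : ℝ,
      φ t (l t * s) = f (φ t s) - t * γ (φ t s) (φ t (s / l t)))
    (s_c : ℝ) (hc : deriv f (φ 0 s_c) = 0) :
    deriv (φ 0) (lam₀ * s_c) = 0 ∧
    deriv (fun t => φ t (lam₀ * s_c)) 0 = -γ (φ 0 s_c) (φ 0 (s_c / lam₀)) := by
  subst hl0
  have hΦ : ∀ p : ℝ × ℝ, HasFDerivAt (fun p : ℝ × ℝ => φ p.1 p.2) _ p :=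
    fun p => (hφ.differentiable one_ne_zero p).hasFDerivAt
  have hsemi : Function.Semiconj (φ 0) (l 0 * ·) f := fun s => by
    simpa using heq.self_of_nhds s
  have hcrit : deriv (φ 0) (l 0 * s_c) = 0 :=
    hsemi.deriv_const_mul_eq_zero hlam₀ (hf _) (hΦ _).hasDerivAt_partial_snd.differentiableAt hc
  refine ⟨hcrit, ?_⟩
  set g : ℝ → ℝ := fun t => γ (φ t s_c) (φ t (s_c / l t))
  have hg : ContinuousAt g 0 := by
    have hφc : Continuous fun p : ℝ × ℝ => φ p.1 p.2 := hφ.continuous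
    have hdiv : ContinuousAt (fun t => s_c / l t) 0 := continuousAt_const.div hl.continuousAt hlam₀
    exact hγ.continuousAt.comp (f := fun t => (φ t s_c, φ t (s_c / l t)))
      ((hφc.continuousAt.comp (continuousAt_id.prodMk continuousAt_const)).prodMk
        (hφc.continuousAt.comp (continuousAt_id.prodMk hdiv)))
  have hlhs : HasDerivAt (fun t => φ t (l t * s_c)) (deriv (fun t => φ t (l 0 * s_c)) 0) 0 :=
    (hΦ _).hasDerivAt_comp_of_deriv_partial_snd_eq_zero (hl.mul_const s_c) hcrit
  have hrhs : HasDerivAt (fun t => f (φ t s_c) - t * g t) (-g 0) 0 := by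
    have hfφ := (hf _).hasDerivAt.comp 0 (hΦ (0, s_c)).hasDerivAt_partial_fst
    rw [hc, zero_mul] at hfφ
    have htg : HasDerivAt (fun t => t * g t) (g 0) 0 := by
      simpa using hasDerivAt_sub_smul_of_continuousAt hg
    have hsub := hfφ.sub htg
    rwa [zero_sub] at hsub
  exact hlhs.unique (hrhs.congr_of_eventuallyEq (heq.mono fun t ht => ht s_c))
end
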